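/- arXiv:1409.7299 — 6 statements merged into one kernel-verified Lean document; each statement's English description precedes it below -/
import Mathlib

section
/- If S is a coconvex subset of R⁺ which is not a lower order ideal in dominance order, then there exists a root α ∈ S such that the Peterson translate τ(S, α) is not equal to S. -/
open scoped RealInnerProductSpace

variable {V : Type*} [NormedAddCommGroup V] [InnerProductSpace ℝ V]

/-- A finite crystallographic root system with a choice of positive and simple roots. -/
structure RootSystemData (V : Type*) [NormedAddCommGroup V] [InnerProductSpace ℝ V] where
  roots : Set V
  pos : Set V
  simple : Set V
  finite : roots.Finite
  zero_not_mem : (0 : V) ∉ roots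
  neg_mem : ∀ α ∈ roots, -α ∈ roots
  crystallographic : ∀ α ∈ roots, ∀ β ∈ roots, ∃ n : ℤ, 2 * ⟪α, β⟫ = (n : ℝ) * ⟪α, α⟫
  reflect_mem : ∀ α ∈ roots, ∀ β ∈ roots, β - (2 * ⟪α, β⟫ / ⟪α, α⟫) • α ∈ roots
  pos_subset : pos ⊆ roots
  pos_total : ∀ α ∈ roots, α ∈ pos ∨ -α ∈ pos
  pos_not_both : ∀ α ∈ pos, -α ∉ pos
  pos_add : ∀ α ∈ pos, ∀ β ∈ pos, α + β ∈ roots → α + β ∈ pos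
  simple_subset : simple ⊆ pos
  simple_indep : LinearIndependent ℝ (fun s : simple => (s : V))
  pos_nat_comb : ∀ α ∈ pos, ∃ c : V →₀ ℕ, ↑c.support ⊆ simple ∧
    α = c.sum fun v n => (n : ℝ) • v

/-- `S` is closed under sums that lie in `P` ("convex"). -/
def IsSumClosed (P S : Set V) : Prop :=
  ∀ ⦃a b : V⦄, a ∈ S → b ∈ S → a + b ∈ P → a + b ∈ S

/-- `S ⊆ P` is coconvex if its complement in `P` is convex. -/
def IsCoconvex (P S : Set V) : Prop :=
  S ⊆ P ∧ IsSumClosed P (P \ S)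

/-- `S ⊆ P` is biconvex if both it and its complement in `P` are convex. -/
def IsBiconvex (P S : Set V) : Prop :=
  S ⊆ P ∧ IsSumClosed P S ∧ IsSumClosed P (P \ S)

/-- `γ` and `δ` lie in the same `α`-string of `P`: they differ by an integer multiple
of `α` and all intermediate points lie in `P`. -/
def SameString (P : Set V) (α γ δ : V) : Prop :=
  γ ∈ P ∧ δ ∈ P ∧ ∃ k : ℤ, δ = γ + k • α ∧
    ∀ j : ℤ, min 0 k ≤ j → j ≤ max 0 k → γ + j • α ∈ P

/-- The Peterson translate `τ(S, α)` of `S ⊆ P` along `α`: on each `α`-string of `P`,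
the `r` elements of `S` are replaced by the bottom `r` elements of the string. -/
def PetersonTranslate (P S : Set V) (α : V) : Set V :=
  {x | ∃ δ : V, δ ∈ P ∧ δ - α ∉ P ∧ ∃ k : ℕ, x = δ + (k : ℤ) • α ∧
        k < (S ∩ {γ | SameString P α δ γ}).ncard}

/-- Dominance order: `α ⪯ β` iff `β - α` is a non-negative combination of simple roots `Δ`. -/
def Dominates (Delta : Set V) (α β : V) : Prop :=
  ∃ c : V →₀ ℝ, ↑c.support ⊆ Delta ∧ (∀ v, 0 ≤ c v) ∧ β - α = c.sum fun v r => r • v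

/-- A lower order ideal of the positive roots in dominance order. -/
def IsLowerOrderIdeal (pos Delta S : Set V) : Prop :=
  S ⊆ pos ∧ ∀ β ∈ S, ∀ α ∈ pos, Dominates Delta α β → α ∈ S

/-- The reflection through the hyperplane orthogonal to `α` (the identity if `α = 0`). -/
noncomputable def reflLin (α : V) : V ≃ₗ[ℝ] V := by
  classical
  exact if h : α = (0 : V) then LinearEquiv.refl ℝ V
  else
    Module.reflection (f := (2 / ⟪α, α⟫) • ((innerSL ℝ α : V →L[ℝ] ℝ) : V →ₗ[ℝ] ℝ)) (x := α)
      (by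
        have h0 : ⟪α, α⟫ ≠ 0 := inner_self_ne_zero.mpr h
        simp only [LinearMap.smul_apply, ContinuousLinearMap.coe_coe, innerSL_apply_apply,
          smul_eq_mul]
        field_simp)

/-- The Weyl group of a set of roots, as a group of linear automorphisms. -/
noncomputable def WeylGroup (R : Set V) : Subgroup (V ≃ₗ[ℝ] V) :=
  Subgroup.closure ((fun α => reflLin α) '' R)

/-- The inversion set `I(w) = {α ∈ R⁺ : w⁻¹ α ∈ R⁻}`. -/
def inversionSet (pos : Set V) (w : V ≃ₗ[ℝ] V) : Set V :=
  {α ∈ pos | -(w.symm α) ∈ pos}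

/-!
If `τ(S, γ) = S` for every `γ ∈ S`, then `x + s ∈ S` with `x, s` positive forces `x ∈ S`:
when `s ∈ S`, the element `x + s` is not the bottom of its `s`-string in the compressed set
`τ(S, s) = S`, so the element `x` just below it is in `S` too; when `s ∉ S`, coconvexity
does it. A set of positive roots with this property is a lower order ideal. If `α ⪯ β` with
`α ≠ β`, then `0 < ‖β - α‖²` yields a simple root `s` occurring in `β - α` with `0 < ⟪s, β⟫`
or `⟪s, α⟫ < 0`; then `β - s` or `α + s` is a positive root, and one step of induction on the
coefficients of `β - α` replaces `β` by `β - s ∈ S` or `α` by `α + s`.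
-/

theorem Finsupp.linearCombination_mapRange_natCast {M : Type*} [AddCommMonoid M] [Module ℝ M]
    (a : M →₀ ℕ) :
    Finsupp.linearCombination ℝ id (a.mapRange (Nat.cast : ℕ → ℝ) Nat.cast_zero) =
      Finsupp.linearCombination ℕ id a := by
  simp [Finsupp.linearCombination_apply, Finsupp.sum_mapRange_index, Nat.cast_smul_eq_nsmul]

theorem exists_mem_support_inner_pos {d : V →₀ ℕ}
    (hd : Finsupp.linearCombination ℕ id d ≠ 0) :
    ∃ s ∈ d.support, 0 < ⟪s, Finsupp.linearCombination ℕ id d⟫ := by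
  set x := Finsupp.linearCombination ℕ id d
  by_contra! h
  have hx : ⟪x, x⟫ = ∑ s ∈ d.support, (d s : ℝ) * ⟪s, x⟫ := by
    change ⟪∑ s ∈ d.support, d s • s, x⟫ = _
    rw [sum_inner]
    simp only [← Nat.cast_smul_eq_nsmul ℝ, real_inner_smul_left]
  have : ⟪x, x⟫ ≤ 0 :=
    hx ▸ Finset.sum_nonpos fun s hs =>
      mul_nonpos_of_nonneg_of_nonpos (d s).cast_nonneg (h s hs)
  exact hd (real_inner_self_nonpos.mp this)

theorem mem_petersonTranslate_of_add_mem {E : Type*} [NormedAddCommGroup E] {P S : Set E}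
    {s x : E} (hx : x ∈ P) (h : x + s ∈ PetersonTranslate P S s) :
    x ∈ PetersonTranslate P S s := by
  obtain ⟨δ, hδ, hδs, k, hk, hklt⟩ := h
  cases k with
  | zero =>
    rw [Nat.cast_zero, zero_smul, add_zero] at hk
    exact absurd (by rwa [← hk, add_sub_cancel_right]) hδs
  | succ k =>
    refine ⟨δ, hδ, hδs, k, ?_, k.lt_succ_self.trans hklt⟩
    rw [Nat.cast_succ, add_smul, one_smul, ← add_assoc] at hk
    exact add_right_cancel hk

theorem IsCoconvex.mem_of_add_mem {E : Type*} [NormedAddCommGroup E] {P S : Set E}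
    (hS : IsCoconvex P S) (hfix : ∀ γ ∈ S, PetersonTranslate P S γ = S) {s x : E}
    (hs : s ∈ P) (hx : x ∈ P) (h : x + s ∈ S) : x ∈ S := by
  by_cases hsS : s ∈ S
  · rw [← hfix s hsS] at h ⊢
    exact mem_petersonTranslate_of_add_mem hx h
  · by_contra hxS
    exact (hS.2 ⟨hx, hxS⟩ ⟨hs, hsS⟩ (hS.1 h)).2 h

namespace RootSystemData

variable (RS : RootSystemData V)

theorem ne_zero_of_mem_roots {α : V} (hα : α ∈ RS.roots) : α ≠ 0 :=
  ne_of_mem_of_not_mem hα RS.zero_not_mem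

theorem ne_zero_of_mem_pos {α : V} (hα : α ∈ RS.pos) : α ≠ 0 :=
  RS.ne_zero_of_mem_roots (RS.pos_subset hα)

theorem sub_mem_roots_of_inner_pos {α β : V} (hα : α ∈ RS.roots) (hβ : β ∈ RS.roots)
    (hαβ : 0 < ⟪α, β⟫) (hne : α ≠ β) : β - α ∈ RS.roots := by
  have hαα : 0 < ⟪α, α⟫ := real_inner_self_pos.mpr (RS.ne_zero_of_mem_roots hα)
  have hββ : 0 < ⟪β, β⟫ := real_inner_self_pos.mpr (RS.ne_zero_of_mem_roots hβ)
  obtain ⟨n, hn⟩ := RS.crystallographic α hα β hβ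
  obtain ⟨m, hm⟩ := RS.crystallographic β hβ α hα
  rw [real_inner_comm] at hm
  by_cases hn1 : n = 1
  · have := RS.reflect_mem α hα β hβ
    rwa [hn, hn1, Int.cast_one, one_mul, div_self hαα.ne', one_smul] at this
  by_cases hm1 : m = 1
  · have := RS.neg_mem _ (RS.reflect_mem β hβ α hα)
    rwa [real_inner_comm, hm, hm1, Int.cast_one, one_mul, div_self hββ.ne', one_smul,
      neg_sub] at this
  -- otherwise both Cartan integers are at least `2`, which forces `‖β - α‖ = 0`
  have two_le {k : ℤ} (hk : (0 : ℝ) < k) (hk1 : k ≠ 1) : (2 : ℝ) ≤ k := by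
    have : (0 : ℤ) < k := by exact_mod_cast hk
    exact_mod_cast (show (2 : ℤ) ≤ k by omega)
  have hn2 := two_le (by nlinarith) hn1
  have hm2 := two_le (by nlinarith) hm1
  have hnonpos : ⟪β - α, β - α⟫ ≤ 0 := by
    rw [inner_sub_sub_self, real_inner_comm α β]
    nlinarith [mul_le_mul_of_nonneg_right hn2 hαα.le, mul_le_mul_of_nonneg_right hm2 hββ.le]
  exact absurd (sub_eq_zero.mp (real_inner_self_nonpos.mp hnonpos)).symm hne

theorem add_mem_pos_of_inner_neg {α s : V} (hα : α ∈ RS.pos) (hs : s ∈ RS.pos)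
    (hsα : ⟪s, α⟫ < 0) : α + s ∈ RS.pos := by
  have hne : -s ≠ α := by
    rintro rfl
    exact RS.pos_not_both s hs hα
  have hroot := RS.sub_mem_roots_of_inner_pos (RS.neg_mem s (RS.pos_subset hs))
    (RS.pos_subset hα) (by rwa [inner_neg_left, neg_pos]) hne
  rw [sub_neg_eq_add] at hroot
  exact RS.pos_add α hα s hs hroot

theorem linearCombination_injOn (R : Type*) [Semiring R] [Module R ℝ] [Module R V]
    [IsScalarTower R ℝ V] [FaithfulSMul R ℝ] [IsScalarTower R ℝ ℝ] :
    Set.InjOn (Finsupp.linearCombination R (id : V → V)) (Finsupp.supported R R RS.simple) :=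
  fun _ ha _ hb h => linearIndepOn_iffₛ.mp
    (linearIndependent_subtype_iff.mp (RS.simple_indep.restrict_scalars' R)) _ ha _ hb h

theorem exists_natCoeffs {α : V} (hα : α ∈ RS.pos) :
    ∃ a : V →₀ ℕ, ↑a.support ⊆ RS.simple ∧ Finsupp.linearCombination ℕ id a = α := by
  obtain ⟨a, ha, rfl⟩ := RS.pos_nat_comb α hα
  exact ⟨a, ha, by simp [Finsupp.linearCombination_apply, Nat.cast_smul_eq_nsmul]⟩

theorem exists_natCoeffs_sub_of_dominates {α β : V} (hα : α ∈ RS.pos) (hβ : β ∈ RS.pos)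
    (h : Dominates RS.simple α β) :
    ∃ d : V →₀ ℕ, ↑d.support ⊆ RS.simple ∧ Finsupp.linearCombination ℕ id d = β - α := by
  obtain ⟨c, hc, hc0, hcβα⟩ := h
  obtain ⟨a, ha, rfl⟩ := RS.exists_natCoeffs hα
  obtain ⟨b, hb, rfl⟩ := RS.exists_natCoeffs hβ
  let cast : (V →₀ ℕ) → (V →₀ ℝ) := fun e => e.mapRange Nat.cast Nat.cast_zero
  have cast_mem {e : V →₀ ℕ} (he : ↑e.support ⊆ RS.simple) :
      cast e ∈ Finsupp.supported ℝ ℝ RS.simple :=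
    (Finsupp.mem_supported' ℝ _).mpr fun v hv => by
      simp [cast, Finsupp.notMem_support_iff.mp fun h => hv (he h)]
  -- the real coefficients of `β - α` are `b - a`, so `c ≥ 0` gives `a ≤ b`
  have hcab : c + cast a = cast b := by
    refine RS.linearCombination_injOn ℝ
      (add_mem ((Finsupp.mem_supported ℝ _).mpr hc) (cast_mem ha)) (cast_mem hb) ?_
    rw [map_add, Finsupp.linearCombination_mapRange_natCast,
      Finsupp.linearCombination_mapRange_natCast, Finsupp.linearCombination_apply]
    simp only [id]
    rw [← hcβα, sub_add_cancel]
  have hab : a ≤ b := fun v => by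
    have := congr($hcab v)
    simp only [Finsupp.add_apply, cast, Finsupp.mapRange_apply] at this
    exact_mod_cast (show (a v : ℝ) ≤ b v by linarith [hc0 v])
  refine ⟨b - a, fun v hv => hb (Finsupp.support_tsub hv), ?_⟩
  rw [eq_sub_iff_add_eq', ← map_add, add_tsub_cancel_of_le hab]

theorem eq_zero_of_add_linearCombination_eq_simple {α s : V} {d : V →₀ ℕ} (hα : α ∈ RS.pos)
    (hs : s ∈ RS.simple) (hd : ↑d.support ⊆ RS.simple)
    (h : α + Finsupp.linearCombination ℕ id d = s) : d = 0 := by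
  obtain ⟨a, ha, rfl⟩ := RS.exists_natCoeffs hα
  have had : a + d = Finsupp.single s 1 :=
    RS.linearCombination_injOn ℕ
      (add_mem ((Finsupp.mem_supported ℕ _).mpr ha) ((Finsupp.mem_supported ℕ _).mpr hd))
      (Finsupp.single_mem_supported ℕ 1 hs) (by simpa using h)
  have hdeg := congrArg Finsupp.degree had
  rw [map_add, Finsupp.degree_single] at hdeg
  have ha0 : Finsupp.degree a ≠ 0 := by
    rw [Ne, Finsupp.degree_eq_zero_iff]
    rintro rfl
    exact RS.ne_zero_of_mem_pos hα (map_zero _)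
  exact (Finsupp.degree_eq_zero_iff d).mp (by omega)

theorem sub_mem_pos_of_inner_pos {β s : V} (hβ : β ∈ RS.pos) (hs : s ∈ RS.simple)
    (hne : s ≠ β) (hsβ : 0 < ⟪s, β⟫) : β - s ∈ RS.pos := by
  have hroot := RS.sub_mem_roots_of_inner_pos (RS.pos_subset (RS.simple_subset hs))
    (RS.pos_subset hβ) hsβ hne
  refine (RS.pos_total _ hroot).resolve_right fun hneg => ?_
  rw [neg_sub] at hneg
  obtain ⟨b, hb, rfl⟩ := RS.exists_natCoeffs hβ
  have hb0 := RS.eq_zero_of_add_linearCombination_eq_simple hneg hs hb (sub_add_cancel _ _)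
  exact RS.ne_zero_of_mem_pos hβ (by rw [hb0, map_zero])

theorem mem_of_linearCombination_eq_sub {S : Set V} (hSpos : S ⊆ RS.pos)
    (hS : ∀ x ∈ RS.pos, ∀ s ∈ RS.simple, x + s ∈ S → x ∈ S)
    (d : V →₀ ℕ) (hd : ↑d.support ⊆ RS.simple) :
    ∀ β ∈ S, ∀ α ∈ RS.pos, Finsupp.linearCombination ℕ id d = β - α → α ∈ S := by
  induction d using WellFoundedLT.induction with
  | _ d ih =>
    intro β hβ α hα hdβα
    obtain rfl | hne := eq_or_ne α β
    · exact hβ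
    obtain ⟨s, hsd, hs⟩ := exists_mem_support_inner_pos (hdβα ▸ sub_ne_zero.mpr hne.symm)
    have hsΔ : s ∈ RS.simple := hd hsd
    set d' := d - Finsupp.single s 1
    have hdd' : d' + Finsupp.single s 1 = d := tsub_add_cancel_of_le
      (Finsupp.single_le_iff.mpr (Nat.one_le_iff_ne_zero.mpr (Finsupp.mem_support_iff.mp hsd)))
    have hlt : d' < d := by
      rw [← hdd']
      exact lt_add_of_pos_right _ (by simp [pos_iff_ne_zero])
    have hd' : ↑d'.support ⊆ RS.simple := fun v hv => hd (Finsupp.support_tsub hv)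
    have hd'βα : Finsupp.linearCombination ℕ id d' = β - α - s := by
      rw [eq_sub_iff_add_eq, ← hdβα, ← hdd', map_add, Finsupp.linearCombination_single, one_smul,
        id]
    rw [hdβα, inner_sub_right, sub_pos] at hs
    rcases lt_or_ge 0 ⟪s, β⟫ with hsβ | hsβ
    · have hsβne : s ≠ β := by
        rintro rfl
        have hd0 := RS.eq_zero_of_add_linearCombination_eq_simple hα hsΔ hd
          (by rw [hdβα, add_sub_cancel])
        simp [hd0] at hsd
      have hβs : β - s ∈ S :=
        hS _ (RS.sub_mem_pos_of_inner_pos (hSpos hβ) hsΔ hsβne hsβ) s hsΔ (by rwa [sub_add_cancel])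
      exact ih d' hlt hd' (β - s) hβs α hα (by rw [hd'βα]; abel)
    · have hαs := RS.add_mem_pos_of_inner_neg hα (RS.simple_subset hsΔ) (by linarith)
      exact hS α hα s hsΔ (ih d' hlt hd' β hβ (α + s) hαs (by rw [hd'βα]; abel))

theorem isLowerOrderIdeal_of_forall_add_simple_mem {S : Set V} (hSpos : S ⊆ RS.pos)
    (hS : ∀ x ∈ RS.pos, ∀ s ∈ RS.simple, x + s ∈ S → x ∈ S) :
    IsLowerOrderIdeal RS.pos RS.simple S := by
  refine ⟨hSpos, fun β hβ α hα hαβ => ?_⟩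
  obtain ⟨d, hd, hdβα⟩ := RS.exists_natCoeffs_sub_of_dominates hα (hSpos hβ) hαβ
  exact RS.mem_of_linearCombination_eq_sub hSpos hS d hd β hβ α hα hdβα

end RootSystemData

/-- A coconvex set which is not a lower order ideal admits a nontrivial
Peterson translate. -/
theorem exists_nontrivial_petersonTranslate
    (RS : RootSystemData V) (S : Set V)
    (hS : IsCoconvex RS.pos S)
    (hnot : ¬ IsLowerOrderIdeal RS.pos RS.simple S) :
    ∃ α ∈ S, PetersonTranslate RS.pos S α ≠ S := by
  by_contra! hfix
  exact hnot <| RS.isLowerOrderIdeal_of_forall_add_simple_mem hS.1 fun x hx s hs hxs =>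
    hS.mem_of_add_mem hfix (RS.simple_subset hs) hx hxs
end

section
/- Peterson translation is local: if S ⊆ R⁺, U is a linear subspace of the ambient space containing α, and S_U = S ∩ U, R_U = R ∩ U, then τ(S, α) ∩ U = τ(S_U, α), where the translate on the right is computed in the root system R_U with positive roots R⁺ ∩ U. -/
open scoped RealInnerProductSpace

variable {V : Type*} [NormedAddCommGroup V] [InnerProductSpace ℝ V]

/-! Since `α ∈ U`, an `α`-string of `R⁺` through a point of `U` lies entirely in `U`. Hence the
`α`-strings of `R⁺ ∩ U` are exactly the `α`-strings of `R⁺` meeting `U`, with the same bottom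
elements and the same intersections with `S`, so both translates fill the same initial
segments. -/

namespace SameString

variable {P : Set V} {α γ δ : V} {U : Submodule ℝ V}

lemma mem_submodule (h : SameString P α δ γ) (hαU : α ∈ U) (hδU : δ ∈ U) : γ ∈ U := by
  obtain ⟨-, -, k, rfl, -⟩ := h
  exact U.add_mem hδU (zsmul_mem hαU k)

lemma inter_submodule_iff (hαU : α ∈ U) (hδU : δ ∈ U) :
    SameString (P ∩ U) α δ γ ↔ SameString P α δ γ := by
  have hmem : ∀ j : ℤ, δ + j • α ∈ U := fun j => U.add_mem hδU (zsmul_mem hαU j)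
  constructor
  · rintro ⟨⟨hδ, -⟩, ⟨hγ, -⟩, k, hk, hstring⟩
    exact ⟨hδ, hγ, k, hk, fun j hj hj' => (hstring j hj hj').1⟩
  · rintro ⟨hδ, hγ, k, rfl, hstring⟩
    exact ⟨⟨hδ, hδU⟩, ⟨hγ, hmem k⟩, k, rfl, fun j hj hj' => ⟨hstring j hj hj', hmem j⟩⟩

end SameString

lemma inter_setOf_sameString_inter_submodule {P S : Set V} {α δ : V} {U : Submodule ℝ V}
    (hαU : α ∈ U) (hδU : δ ∈ U) :
    (S ∩ U) ∩ {γ | SameString (P ∩ U) α δ γ} = S ∩ {γ | SameString P α δ γ} := by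
  ext γ
  simp only [Set.mem_inter_iff, Set.mem_ofPred_eq, SameString.inter_submodule_iff hαU hδU]
  exact ⟨fun ⟨⟨hγS, _⟩, hstring⟩ => ⟨hγS, hstring⟩,
    fun ⟨hγS, hstring⟩ => ⟨⟨hγS, hstring.mem_submodule hαU hδU⟩, hstring⟩⟩

lemma petersonTranslate_inter_submodule (P S : Set V) {α : V} {U : Submodule ℝ V}
    (hαU : α ∈ U) :
    PetersonTranslate P S α ∩ U = PetersonTranslate (P ∩ U) (S ∩ U) α := by
  ext x
  simp only [Set.mem_inter_iff, PetersonTranslate, Set.mem_ofPred_eq]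
  constructor
  · rintro ⟨⟨δ, hδP, hδα, k, rfl, hk⟩, hxU⟩
    have hδU : δ ∈ U := (U.add_mem_iff_left (zsmul_mem hαU k)).mp hxU
    refine ⟨δ, ⟨hδP, hδU⟩, fun h => hδα h.1, k, rfl, ?_⟩
    rwa [inter_setOf_sameString_inter_submodule hαU hδU]
  · rintro ⟨δ, ⟨hδP, hδU⟩, hδα, k, rfl, hk⟩
    refine ⟨⟨δ, hδP, fun h => hδα ⟨h, U.sub_mem hδU hαU⟩, k, rfl, ?_⟩,
      U.add_mem hδU (zsmul_mem hαU k)⟩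
    rwa [← inter_setOf_sameString_inter_submodule hαU hδU]

theorem petersonTranslate_local_general
    (RS : RootSystemData V) (S : Set V)
    (α : V)
    (U : Submodule ℝ V) (hαU : α ∈ U) :
    PetersonTranslate RS.pos S α ∩ ↑U = PetersonTranslate (RS.pos ∩ ↑U) (S ∩ ↑U) α :=
  petersonTranslate_inter_submodule RS.pos S hαU

/-- Peterson translation is local: for a subspace `U` containing `α`,
`τ(S, α) ∩ U = τ(S_U, α)`, the latter computed in the root system `R_U = R ∩ U` with
positive roots `R⁺ ∩ U`. -/
theorem petersonTranslate_local
    (RS : RootSystemData V) (S : Set V) (hS : S ⊆ RS.pos)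
    (α : V) (hα : α ∈ RS.pos)
    (U : Submodule ℝ V) (hαU : α ∈ U) :
    PetersonTranslate RS.pos S α ∩ ↑U = PetersonTranslate (RS.pos ∩ ↑U) (S ∩ ↑U) α :=
  petersonTranslate_local_general RS S α U hαU
end

section
/- If τ(S, α) ≠ S for a subset S ⊆ R⁺ and α ∈ R⁺, then the sum of the heights of the roots in τ(S, α) is strictly less than the sum of the heights of the roots in S. -/
open scoped RealInnerProductSpace

variable {V : Type*} [NormedAddCommGroup V] [InnerProductSpace ℝ V]

/-! Write every point of a finite set `P` as `δ + k • α` with `δ` the bottom of its `α`-string.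
In these coordinates `S` becomes a finite set `A` of pairs `(δ, k)`, and `τ(S, α)` is obtained
from `A` by replacing each fiber `{k | (δ, k) ∈ A}` by the initial segment `{0, …, r - 1}` of the
same size. The height `ht δ + k • ht α` is strictly increasing in `k` because `ht α > 0`, and among
the `r`-element subsets of `ℕ` the initial segment has the least sum of any strictly increasing
function, strictly so for every other subset. -/

namespace Finset

variable {M : Type*} [AddCommMonoid M] [PartialOrder M] [IsOrderedCancelAddMonoid M]
  {f : ℕ → M}

theorem sum_range_card_lt_sum (hf : StrictMono f) {T : Finset ℕ} (hT : T ≠ range #T) :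
    ∑ i ∈ range #T, f i < ∑ i ∈ T, f i := by
  set n := #T
  have hcard : #(range n \ T) = #(T \ range n) := card_sdiff_comm (by simp [n])
  have hmissing : (range n \ T).Nonempty :=
    sdiff_nonempty.2 fun h => hT (eq_of_subset_of_card_le h (by simp [n])).symm
  calc ∑ i ∈ range n, f i = ∑ i ∈ range n ∩ T, f i + ∑ i ∈ range n \ T, f i :=
        (sum_inter_add_sum_sdiff _ _ _).symm
    _ < ∑ i ∈ T ∩ range n, f i + #(T \ range n) • f n := by
        rw [inter_comm, ← hcard, ← sum_const]
        exact add_lt_add_right (sum_lt_sum_of_nonempty hmissing fun i hi =>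
          hf (mem_range.1 (mem_sdiff.1 hi).1)) _
    _ ≤ ∑ i ∈ T ∩ range n, f i + ∑ i ∈ T \ range n, f i := by
        gcongr
        exact card_nsmul_le_sum _ _ _ fun i hi =>
          hf.monotone (not_lt.1 (mt mem_range.2 (mem_sdiff.1 hi).2))
    _ = ∑ i ∈ T, f i := sum_inter_add_sum_sdiff _ _ _

end Finset

section CompressFibers

open Finset

variable {ι : Type*}

def compressFibers (A : Set (ι × ℕ)) : Set (ι × ℕ) :=
  {p | p.2 < (Prod.mk p.1 ⁻¹' A).ncard}

theorem compressFibers_subset {A C : Set (ι × ℕ)} (hAC : A ⊆ C)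
    (hC : ∀ ⦃i k j⦄, (i, k) ∈ C → j ≤ k → (i, j) ∈ C) : compressFibers A ⊆ C := by
  rintro ⟨i, k⟩ hk
  obtain ⟨m, hm, hkm⟩ : ∃ m ∈ Prod.mk i ⁻¹' A, k ≤ m := by
    by_contra! hlt
    have := Set.ncard_le_ncard (show Prod.mk i ⁻¹' A ⊆ Set.Iio k from hlt) (Set.finite_Iio k)
    rw [Set.ncard_Iio_nat] at this
    exact (lt_irrefl k) (lt_of_lt_of_le hk this)
  exact hC (hAC hm) hkm

theorem finsum_mem_compressFibers_lt {M : Type*} [AddCommMonoid M] [PartialOrder M]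
    [IsOrderedCancelAddMonoid M] {A : Set (ι × ℕ)} (hA : A.Finite) {g : ι × ℕ → M}
    (hg : ∀ i, StrictMono fun k => g (i, k)) (hne : compressFibers A ≠ A) :
    ∑ᶠ p ∈ compressFibers A, g p < ∑ᶠ p ∈ A, g p := by
  classical
  set s := hA.toFinset.image Prod.fst
  have hfiber (i : ι) : (Prod.mk i ⁻¹' A).Finite := hA.preimage (Prod.mk_right_injective i).injOn
  set t : ι → Finset ℕ := fun i => (hfiber i).toFinset
  set r := s.biUnion fun i => (range #(t i)).image (Prod.mk i)
  have hA_mem : ∀ p : ι × ℕ, p ∈ hA.toFinset ↔ p.1 ∈ s ∧ p.2 ∈ t p.1 := by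
    rintro ⟨i, k⟩
    simpa [s, t] using fun h => ⟨k, h⟩
  have hr_mem : ∀ p : ι × ℕ, p ∈ r ↔ p.1 ∈ s ∧ p.2 ∈ range #(t p.1) := by
    rintro ⟨i, k⟩
    simp [r]
  have hr : (r : Set (ι × ℕ)) = compressFibers A := by
    ext ⟨i, k⟩
    have hcard : (Prod.mk i ⁻¹' A).ncard = #(t i) := Set.ncard_eq_toFinset_card _ (hfiber i)
    change _ ↔ k < _
    rw [mem_coe, hr_mem, hcard, mem_range, and_iff_right_iff_imp]
    intro hk
    obtain ⟨m, hm⟩ := card_pos.1 (k.zero_le.trans_lt hk)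
    exact mem_image_of_mem Prod.fst (a := (i, m))
      (hA.mem_toFinset.2 ((hfiber i).mem_toFinset.1 hm))
  have hA_sum : ∑ᶠ p ∈ A, g p = ∑ i ∈ s, ∑ k ∈ t i, g (i, k) := by
    rw [finsum_mem_eq_finite_toFinset_sum _ hA, sum_finset_product _ _ _ hA_mem]
  have hr_sum : ∑ᶠ p ∈ compressFibers A, g p = ∑ i ∈ s, ∑ k ∈ range #(t i), g (i, k) := by
    rw [← hr, finsum_mem_coe_finset, sum_finset_product _ _ (fun i => range #(t i)) hr_mem]
  obtain ⟨i, hi, hti⟩ : ∃ i ∈ s, t i ≠ range #(t i) := by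
    by_contra! hall
    refine hne (hr ▸ Set.ext fun p => ?_)
    rw [mem_coe, hr_mem, ← hA.mem_toFinset, hA_mem]
    exact and_congr_right fun hp => by rw [← hall _ hp]
  rw [hA_sum, hr_sum]
  refine sum_lt_sum (fun i _ => ?_) ⟨i, hi, sum_range_card_lt_sum (hg i) hti⟩
  obtain hti | hti := eq_or_ne (t i) (range #(t i))
  · rw [← hti]
  · exact (sum_range_card_lt_sum (hg i) hti).le

end CompressFibers

section Strings

variable {G : Type*} [AddCommGroup G] {P : Set G} {α : G}

/-- `(δ, k)` with `δ` the bottom of an `α`-string of `P` that contains `δ + k • α`. -/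
def stringCoords (P : Set G) (α : G) : Set (G × ℕ) :=
  {p | p.1 - α ∉ P ∧ ∀ j ≤ p.2, p.1 + (j : ℤ) • α ∈ P}

def stringPoint (α : G) (p : G × ℕ) : G := p.1 + (p.2 : ℤ) • α

theorem mem_stringCoords_of_le {δ : G} {k j : ℕ} (h : (δ, k) ∈ stringCoords P α) (hjk : j ≤ k) :
    (δ, j) ∈ stringCoords P α :=
  ⟨h.1, fun i hi => h.2 i (hi.trans hjk)⟩

theorem stringPoint_mem {p : G × ℕ} (hp : p ∈ stringCoords P α) : stringPoint α p ∈ P :=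
  hp.2 p.2 le_rfl

theorem snd_le_of_stringPoint_eq {p q : G × ℕ} (hp : p ∈ stringCoords P α) (hq : q.1 - α ∉ P)
    (h : stringPoint α p = stringPoint α q) : p.2 ≤ q.2 := by
  by_contra! hlt
  obtain ⟨d, hd⟩ : ∃ d, p.2 = q.2 + d + 1 := ⟨p.2 - q.2 - 1, by omega⟩
  refine hq ?_
  have hq1 : q.1 - α = p.1 + (d : ℤ) • α := by
    simp only [stringPoint, hd, Nat.cast_add, Nat.cast_one] at h
    linear_combination (norm := module) -h
  rw [hq1]
  exact hp.2 d (by omega)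

theorem stringPoint_injOn : Set.InjOn (stringPoint α) (stringCoords P α) := fun p hp q hq h => by
  have h2 : p.2 = q.2 :=
    le_antisymm (snd_le_of_stringPoint_eq hp hq.1 h) (snd_le_of_stringPoint_eq hq hp.1 h.symm)
  exact Prod.ext (by simpa [stringPoint, h2] using h) h2

theorem compressFibers_subset_stringCoords {A : Set (G × ℕ)} (hA : A ⊆ stringCoords P α) :
    compressFibers A ⊆ stringCoords P α :=
  compressFibers_subset hA fun _ _ _ => mem_stringCoords_of_le

theorem stringCoords_finite (hP : P.Finite) : (stringCoords P α).Finite :=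
  Set.Finite.of_finite_image (hP.subset (Set.image_subset_iff.2 fun _ => stringPoint_mem))
    stringPoint_injOn

theorem image_stringPoint_stringCoords [IsAddTorsionFree G] (hP : P.Finite) (hα : α ≠ 0) :
    stringPoint α '' stringCoords P α = P := by
  refine subset_antisymm (Set.image_subset_iff.2 fun _ => stringPoint_mem) fun x hx => ?_
  have hleave : ∃ n : ℕ, x - ((n + 1 : ℕ) : ℤ) • α ∉ P := by
    by_contra! hall
    have hinj : Function.Injective fun n : ℕ => x - ((n + 1 : ℕ) : ℤ) • α := fun a b hab => by
      simpa [hα] using hab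
    exact Set.infinite_range_of_injective hinj (hP.subset (Set.range_subset_iff.2 hall))
  classical
  set m := Nat.find hleave
  have hout : x - ((m + 1 : ℕ) : ℤ) • α ∉ P := Nat.find_spec hleave
  have hbelow : ∀ n ≤ m, x - (n : ℤ) • α ∈ P
    | 0, _ => by simpa using hx
    | n + 1, hn => not_not.1 (Nat.find_min hleave (by omega))
  refine ⟨(x - (m : ℤ) • α, m), ⟨?_, fun j hj => ?_⟩, by simp [stringPoint]⟩
  · convert hout using 2
    push_cast
    module
  · convert hbelow (m - j) (by omega) using 1
    push_cast [Nat.cast_sub hj]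
    module

end Strings

section PetersonTranslate

variable {E : Type*} [NormedAddCommGroup E] {P : Set E} {α δ : E}

theorem setOf_sameString_eq_image (hδ : δ - α ∉ P) :
    {γ | SameString P α δ γ} =
      (fun k => stringPoint α (δ, k)) '' (Prod.mk δ ⁻¹' stringCoords P α) := by
  ext γ
  constructor
  · rintro ⟨-, -, k, rfl, hchain⟩
    have hk : 0 ≤ k := by
      by_contra! hk
      exact hδ (by simpa [sub_eq_add_neg] using hchain (-1) (by omega) (by omega))
    refine ⟨k.toNat, ⟨hδ, fun j hj => hchain j (by omega) (by omega)⟩, ?_⟩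
    simp [stringPoint, Int.toNat_of_nonneg hk]
  · rintro ⟨k, hk, rfl⟩
    refine ⟨by simpa using hk.2 0 k.zero_le, stringPoint_mem hk, k, rfl, fun j hj₀ hjk => ?_⟩
    lift j to ℕ using by omega
    exact hk.2 j (by omega)

theorem ncard_inter_setOf_sameString (hδ : δ - α ∉ P) (S : Set E) :
    (S ∩ {γ | SameString P α δ γ}).ncard =
      (Prod.mk δ ⁻¹' (stringCoords P α ∩ stringPoint α ⁻¹' S)).ncard := by
  rw [setOf_sameString_eq_image hδ, Set.inter_comm, ← Set.image_inter_preimage,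
    Set.InjOn.ncard_image]
  · rfl
  · exact fun k hk k' hk' h => congrArg Prod.snd (stringPoint_injOn hk.1 hk'.1 h)

theorem petersonTranslate_eq_image_compressFibers (S : Set E) :
    PetersonTranslate P S α =
      stringPoint α '' compressFibers (stringCoords P α ∩ stringPoint α ⁻¹' S) := by
  ext x
  constructor
  · rintro ⟨δ, -, hδ, k, rfl, hk⟩
    refine ⟨(δ, k), ?_, rfl⟩
    rwa [ncard_inter_setOf_sameString hδ] at hk
  · rintro ⟨⟨δ, k⟩, hk, rfl⟩
    have hδk := compressFibers_subset_stringCoords Set.inter_subset_left hk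
    refine ⟨δ, by simpa using hδk.2 0 k.zero_le, hδk.1, k, rfl, ?_⟩
    rw [ncard_inter_setOf_sameString hδk.1]
    exact hk

end PetersonTranslate

theorem RootSystemData.height_pos (RS : RootSystemData V) {ht : V →ₗ[ℝ] ℝ}
    (hht : ∀ s ∈ RS.simple, ht s = 1) {α : V} (hα : α ∈ RS.pos) : 0 < ht α := by
  obtain ⟨c, hsupp, rfl⟩ := RS.pos_nat_comb α hα
  have hc : c ≠ 0 := by
    rintro rfl
    exact RS.zero_not_mem (by simpa using RS.pos_subset hα)
  have hval : ht (c.sum fun v n => (n : ℝ) • v) = ∑ v ∈ c.support, (c v : ℝ) := by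
    rw [map_finsuppSum, Finsupp.sum]
    exact Finset.sum_congr rfl fun v hv => by rw [map_smul, smul_eq_mul, hht v (hsupp hv), mul_one]
  obtain ⟨v, hv⟩ := Finsupp.support_nonempty_iff.2 hc
  rw [hval]
  exact Finset.sum_pos' (fun _ _ => by positivity)
    ⟨v, hv, Nat.cast_pos.2 (Nat.pos_of_ne_zero (Finsupp.mem_support_iff.1 hv))⟩

/-- If `τ(S, α) ≠ S`, then the total height of `τ(S, α)` is strictly less than
that of `S`.  Height is measured by any linear functional taking the value `1` on each
simple root. -/
theorem petersonTranslate_height_lt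
    (RS : RootSystemData V)
    (ht : V →ₗ[ℝ] ℝ) (hht : ∀ s ∈ RS.simple, ht s = 1)
    (S : Set V) (hS : S ⊆ RS.pos) (α : V) (hα : α ∈ RS.pos)
    (hne : PetersonTranslate RS.pos S α ≠ S) :
    ∑ᶠ x ∈ PetersonTranslate RS.pos S α, ht x < ∑ᶠ x ∈ S, ht x := by
  have hP : RS.pos.Finite := RS.finite.subset RS.pos_subset
  have hα₀ : α ≠ 0 := fun h => RS.zero_not_mem (h ▸ RS.pos_subset hα)
  have := IsAddTorsionFree.of_isTorsionFree ℝ V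
  set A := stringCoords RS.pos α ∩ stringPoint α ⁻¹' S
  have hS_eq : stringPoint α '' A = S := by
    rw [Set.image_inter_preimage, image_stringPoint_stringCoords hP hα₀, Set.inter_eq_right.2 hS]
  have hτ_eq := petersonTranslate_eq_image_compressFibers (P := RS.pos) (α := α) S
  have hstrict (δ : V) : StrictMono fun k => ht (stringPoint α (δ, k)) :=
    strictMono_nat_of_lt_succ fun k => by
      simp [stringPoint, add_smul, RS.height_pos hht hα]
  have hA : A.Finite := (stringCoords_finite hP).subset Set.inter_subset_left
  calc ∑ᶠ x ∈ PetersonTranslate RS.pos S α, ht x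
      = ∑ᶠ p ∈ compressFibers A, ht (stringPoint α p) := by
        rw [hτ_eq, finsum_mem_image
          (stringPoint_injOn.mono (compressFibers_subset_stringCoords Set.inter_subset_left))]
    _ < ∑ᶠ p ∈ A, ht (stringPoint α p) :=
        finsum_mem_compressFibers_lt hA hstrict fun h => hne (by rw [hτ_eq, h, hS_eq])
    _ = ∑ᶠ x ∈ S, ht x := by
        rw [← finsum_mem_image (stringPoint_injOn.mono Set.inter_subset_left), hS_eq]
end

section
/- For a subspace U of the ambient space of a finite crystallographic root system R and an element w of the Weyl group, the set I(w) ∩ U is a biconvex subset of the root system R_U = R ∩ U with positive roots R⁺ ∩ U; consequently, if a biconvex set S contains the pattern (S_0, R_0) via a subspace U (i.e., R_U ≅ R_0 identifies S ∩ U with S_0), then S_0 is biconvex in R_0. -/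
open scoped RealInnerProductSpace

variable {V : Type*} [NormedAddCommGroup V] [InnerProductSpace ℝ V]

/-! Intersecting with any set `U` preserves biconvexity, since
`(R⁺ ∩ U) \ (S ∩ U) = (R⁺ \ S) ∩ U`. So it suffices that `I(w)` is biconvex in `R⁺`:
`w⁻¹` maps roots to roots, so if `w⁻¹` sends two positive roots both to negative (resp. both
to positive) roots, it sends their sum, when a root, to a negative (resp. positive) root. -/

theorem IsSumClosed.inter {E : Type*} [NormedAddCommGroup E] {P S : Set E}
    (hS : IsSumClosed P S) (U : Set E) :
    IsSumClosed (P ∩ U) (S ∩ U) :=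
  fun _ _ ha hb hab => ⟨hS ha.1 hb.1 hab.1, hab.2⟩

theorem IsBiconvex.inter {E : Type*} [NormedAddCommGroup E] {P S : Set E}
    (hS : IsBiconvex P S) (U : Set E) :
    IsBiconvex (P ∩ U) (S ∩ U) := by
  obtain ⟨hSP, hS, hSc⟩ := hS
  refine ⟨Set.inter_subset_inter_left U hSP, hS.inter U, ?_⟩
  rw [← Set.inter_sdiff_distrib_right]
  exact hSc.inter U

theorem reflLin_apply_of_ne_zero {α : V} (hα : α ≠ 0) (v : V) :
    reflLin α v = v - (2 * ⟪α, v⟫ / ⟪α, α⟫) • α := by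
  rw [reflLin, dif_neg hα, Module.reflection_apply]
  congr 2
  simp only [LinearMap.smul_apply, ContinuousLinearMap.coe_coe, innerSL_apply_apply, smul_eq_mul]
  ring

theorem reflLin_symm (α : V) : (reflLin α).symm = reflLin α := by
  by_cases h : α = 0
  · simp [reflLin, h]
  · rw [reflLin, dif_neg h]
    exact Module.reflection_symm _

namespace RootSystemData

variable (RS : RootSystemData V)

theorem mapsTo_reflLin_roots {α : V} (hα : α ∈ RS.roots) :
    Set.MapsTo (reflLin α) RS.roots RS.roots := fun β hβ => by
  rw [reflLin_apply_of_ne_zero (ne_of_mem_of_not_mem hα RS.zero_not_mem)]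
  exact RS.reflect_mem α hα β hβ

theorem mapsTo_roots_of_mem_weylGroup {w : V ≃ₗ[ℝ] V} (hw : w ∈ WeylGroup RS.roots) :
    Set.MapsTo w RS.roots RS.roots := by
  induction hw using Subgroup.closure_induction'' with
  | mem _ hr =>
    obtain ⟨α, hα, rfl⟩ := hr
    exact RS.mapsTo_reflLin_roots hα
  | inv_mem _ hr =>
    obtain ⟨α, hα, rfl⟩ := hr
    rw [LinearEquiv.coe_inv, reflLin_symm]
    exact RS.mapsTo_reflLin_roots hα
  | one => exact Set.mapsTo_id _
  | mul _ _ _ _ hx hy => exact hx.comp hy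

theorem isBiconvex_inversionSet {w : V ≃ₗ[ℝ] V}
    (hw : Set.MapsTo w.symm RS.roots RS.roots) :
    IsBiconvex RS.pos (inversionSet RS.pos w) := by
  refine ⟨fun _ ha => ha.1, ?_, ?_⟩
  · intro a b ha hb hab
    have hroot : -w.symm a + -w.symm b ∈ RS.roots := by
      simpa [neg_add, add_comm] using RS.neg_mem _ (hw (RS.pos_subset hab))
    refine ⟨hab, ?_⟩
    rw [map_add, neg_add]
    exact RS.pos_add _ ha.2 _ hb.2 hroot
  · have pos_of_not_mem {a : V} (ha : a ∈ RS.pos \ inversionSet RS.pos w) :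
        w.symm a ∈ RS.pos :=
      (RS.pos_total _ (hw (RS.pos_subset ha.1))).resolve_right fun h => ha.2 ⟨ha.1, h⟩
    intro a b ha hb hab
    have hsum : w.symm (a + b) ∈ RS.pos := by
      rw [map_add]
      refine RS.pos_add _ (pos_of_not_mem ha) _ (pos_of_not_mem hb) ?_
      rw [← map_add]
      exact hw (RS.pos_subset hab)
    exact ⟨hab, fun h => RS.pos_not_both _ hsum h.2⟩

end RootSystemData

/-- For a subspace `U` and a Weyl group element `w`, the set `I(w) ∩ U` is
biconvex in the root system `R_U = R ∩ U` with positive roots `R⁺ ∩ U`; more generally,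
the intersection with `U` of any biconvex set is biconvex in `R_U`. -/
theorem inversionSet_inter_subspace_isBiconvex
    (RS : RootSystemData V) (U : Submodule ℝ V)
    (w : V ≃ₗ[ℝ] V) (hw : w ∈ WeylGroup RS.roots) :
    IsBiconvex (RS.pos ∩ ↑U) (inversionSet RS.pos w ∩ ↑U) ∧
    (∀ S : Set V, IsBiconvex RS.pos S → IsBiconvex (RS.pos ∩ ↑U) (S ∩ ↑U)) :=
  ⟨(RS.isBiconvex_inversionSet (RS.mapsTo_roots_of_mem_weylGroup (inv_mem hw))).inter U,
    fun _ hS => hS.inter U⟩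
end

section
/- In the root system C_n with positive roots {e_j − e_i : 1 ≤ i < j ≤ n} ∪ {e_i + e_j : 1 ≤ i ≤ j ≤ n}, a short positive root α lies in the subsystem A_{n−1} = {e_j − e_i} if and only if there exists a positive long root β such that the roots of C_n lying in span{α, β} form a root system of type C_2 with α and β as its short and long simple roots; moreover, when α = e_j − e_i with i < j, the root β = 2e_i is the unique such root. -/
open scoped RealInnerProductSpace

/-!
For `α = e_j - e_i` and `β = 2e_i`, every vector of `span {α, β}` vanishes off the coordinates
`i, j`, and the roots of `Cₙ` supported on `{i, j}` are exactly `±(e_j - e_i)`, `±2e_i`,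
`±(e_i + e_j) = ±(α + β)` and `±2e_j = ±(2α + β)`.

Conversely, a long positive root is `β = 2e_k`, and if `2α + β` is a root then
`|2α + β|² = 12 + 8 α_k ∈ {2, 4}` forces `α_k = -1`. The only short positive roots with a
coordinate `-1` are the `e_j - e_k` with `k < j`, which gives both the converse and `β = 2e_i`.
-/

namespace StmtCn

/-- The standard basis vector `e i` of `ℝⁿ`. -/
noncomputable def e {n : ℕ} (i : Fin n) : EuclideanSpace ℝ (Fin n) :=
  EuclideanSpace.single i 1

/-- The positive roots of `Cₙ`: `e_j - e_i` and `e_i + e_j` for `i < j`, and `2eᵢ`. -/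
noncomputable def CnPos (n : ℕ) : Set (EuclideanSpace ℝ (Fin n)) :=
  {v | (∃ i j : Fin n, i < j ∧ (v = e j - e i ∨ v = e i + e j)) ∨ ∃ i : Fin n, v = e i + e i}

/-- The roots of `Cₙ`. -/
noncomputable def CnRoots (n : ℕ) : Set (EuclideanSpace ℝ (Fin n)) :=
  {v | v ∈ CnPos n ∨ -v ∈ CnPos n}

variable {n : ℕ}

@[simp]
lemma e_apply (i k : Fin n) : e i k = if k = i then 1 else 0 := by
  simp [e, PiLp.single_apply]

lemma inner_e_right (v : EuclideanSpace ℝ (Fin n)) (k : Fin n) : ⟪v, e k⟫ = v k := by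
  simp [e, EuclideanSpace.inner_single_right]

lemma inner_self_e_sub_e {i j : Fin n} (h : i ≠ j) : ⟪e j - e i, e j - e i⟫ = 2 := by
  simp only [inner_sub_left, inner_sub_right, inner_e_right, e_apply, if_neg h, if_neg h.symm]
  norm_num

lemma inner_self_e_add_e {i j : Fin n} (h : i ≠ j) : ⟪e i + e j, e i + e j⟫ = 2 := by
  simp only [inner_add_left, inner_add_right, inner_e_right, e_apply, if_neg h, if_neg h.symm]
  norm_num

lemma inner_self_e_add_self (k : Fin n) : ⟪e k + e k, e k + e k⟫ = 4 := by
  simp only [inner_add_left, inner_add_right, inner_e_right, e_apply]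
  norm_num

lemma inner_self_of_mem_CnPos {γ : EuclideanSpace ℝ (Fin n)} (h : γ ∈ CnPos n) :
    ⟪γ, γ⟫ = 2 ∨ ⟪γ, γ⟫ = 4 := by
  rcases h with ⟨i, j, hij, rfl | rfl⟩ | ⟨k, rfl⟩
  · exact .inl (inner_self_e_sub_e hij.ne)
  · exact .inl (inner_self_e_add_e hij.ne)
  · exact .inr (inner_self_e_add_self k)

lemma inner_self_of_mem_CnRoots {γ : EuclideanSpace ℝ (Fin n)} (h : γ ∈ CnRoots n) :
    ⟪γ, γ⟫ = 2 ∨ ⟪γ, γ⟫ = 4 := by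
  rcases h with h | h
  · exact inner_self_of_mem_CnPos h
  · simpa only [inner_neg_neg] using inner_self_of_mem_CnPos h

lemma neg_mem_CnRoots {γ : EuclideanSpace ℝ (Fin n)} (h : γ ∈ CnRoots n) : -γ ∈ CnRoots n := by
  rcases h with h | h
  · exact .inr (by rwa [neg_neg])
  · exact .inl h

lemma exists_eq_e_add_self_of_mem_CnPos {β : EuclideanSpace ℝ (Fin n)} (hβ : β ∈ CnPos n)
    (hlong : ⟪β, β⟫ = 4) : ∃ k, β = e k + e k := by
  rcases hβ with ⟨i, j, hij, rfl | rfl⟩ | hk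
  · rw [inner_self_e_sub_e hij.ne] at hlong; norm_num at hlong
  · rw [inner_self_e_add_e hij.ne] at hlong; norm_num at hlong
  · exact hk

lemma e_sub_e_apply_eq_neg_one_iff {i j : Fin n} (hij : i ≠ j) (k : Fin n) :
    (e j - e i) k = -1 ↔ k = i := by
  by_cases hki : k = i
  · simp [hki, hij]
  · by_cases hkj : k = j <;> norm_num [hki, hkj, hij.symm]

lemma eq_e_sub_e_of_mem_CnPos_of_apply_eq_neg_one {α : EuclideanSpace ℝ (Fin n)}
    (hα : α ∈ CnPos n) {k : Fin n} (hk : α k = -1) : ∃ j, k < j ∧ α = e j - e k := by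
  rcases hα with ⟨i, j, hij, rfl | rfl⟩ | ⟨i, rfl⟩
  · obtain rfl := (e_sub_e_apply_eq_neg_one_iff hij.ne k).mp hk
    exact ⟨j, hij, rfl⟩
  all_goals
    simp only [PiLp.add_apply, e_apply] at hk
    split_ifs at hk <;> norm_num at hk

lemma apply_eq_zero_of_mem_span {ι : Type*} {S : Set (EuclideanSpace ℝ ι)} {a : ι}
    (hS : ∀ v ∈ S, v a = 0) {v : EuclideanSpace ℝ ι} (hv : v ∈ Submodule.span ℝ S) : v a = 0 :=
  LinearMap.eqOn_span (f := EuclideanSpace.projₗ a) (g := 0) hS hv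

lemma eq_of_mem_CnPos_of_apply_eq_zero {i j : Fin n} (hij : i < j) {γ : EuclideanSpace ℝ (Fin n)}
    (hγ : γ ∈ CnPos n) (h0 : ∀ a, a ≠ i → a ≠ j → γ a = 0) :
    γ = e j - e i ∨ γ = e i + e j ∨ γ = e i + e i ∨ γ = e j + e j := by
  have hsupp : ∀ a, γ a ≠ 0 → a = i ∨ a = j := by
    intro a ha
    by_contra! hne
    exact ha (h0 a hne.1 hne.2)
  rcases hγ with ⟨a, b, hab, rfl | rfl⟩ | ⟨a, rfl⟩
  · obtain ⟨rfl, rfl⟩ : a = i ∧ b = j := by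
      have := hsupp a (by simp [hab.ne]); have := hsupp b (by simp [hab.ne']); omega
    exact .inl rfl
  · obtain ⟨rfl, rfl⟩ : a = i ∧ b = j := by
      have := hsupp a (by simp [hab.ne]); have := hsupp b (by simp [hab.ne']); omega
    exact .inr (.inl rfl)
  · rcases hsupp a (by simp) with rfl | rfl
    · exact .inr (.inr (.inl rfl))
    · exact .inr (.inr (.inr rfl))

/-- The roots `R_U` of `Cₙ` lying in `U`. -/
def rootsIn (n : ℕ) (U : Submodule ℝ (EuclideanSpace ℝ (Fin n))) :
    Set (EuclideanSpace ℝ (Fin n)) :=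
  {γ | γ ∈ CnRoots n ∧ γ ∈ U}

def typeC2Roots {V : Type*} [AddCommGroup V] [Module ℝ V] (α β : V) : Set V :=
  {α, -α, β, -β, α + β, -(α + β), (2 : ℝ) • α + β, -((2 : ℝ) • α + β)}

lemma typeC2Roots_subset_rootsIn {α β : EuclideanSpace ℝ (Fin n)} (hα : α ∈ CnRoots n)
    (hβ : β ∈ CnRoots n) (hαβ : α + β ∈ CnRoots n) (h2αβ : (2 : ℝ) • α + β ∈ CnRoots n) :
    typeC2Roots α β ⊆ rootsIn n (Submodule.span ℝ {α, β}) := by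
  set U := Submodule.span ℝ {α, β}
  have hαU : α ∈ U := Submodule.subset_span (by simp)
  have hβU : β ∈ U := Submodule.subset_span (by simp)
  have hmem : ∀ v ∈ CnRoots n, v ∈ U → v ∈ rootsIn n U ∧ -v ∈ rootsIn n U :=
    fun v hv hvU => ⟨⟨hv, hvU⟩, neg_mem_CnRoots hv, U.neg_mem hvU⟩
  have hαβU : α + β ∈ U := U.add_mem hαU hβU
  have h2αβU : (2 : ℝ) • α + β ∈ U := U.add_mem (U.smul_mem _ hαU) hβU
  intro γ hγ
  rcases hγ with rfl | rfl | rfl | rfl | rfl | rfl | rfl | rfl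
  exacts [(hmem _ hα hαU).1, (hmem _ hα hαU).2, (hmem _ hβ hβU).1, (hmem _ hβ hβU).2,
    (hmem _ hαβ hαβU).1, (hmem _ hαβ hαβU).2, (hmem _ h2αβ h2αβU).1, (hmem _ h2αβ h2αβU).2]

lemma rootsIn_span_e_sub_e_e_add_self {i j : Fin n} (hij : i < j) :
    rootsIn n (Submodule.span ℝ {e j - e i, e i + e i}) = typeC2Roots (e j - e i) (e i + e i) := by
  have hsum : (e j - e i) + (e i + e i) = e i + e j := by abel
  have htwice : (2 : ℝ) • (e j - e i) + (e i + e i) = e j + e j := by module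
  refine subset_antisymm ?_ (typeC2Roots_subset_rootsIn (.inl (.inl ⟨i, j, hij, .inl rfl⟩))
    (.inl (.inr ⟨i, rfl⟩)) (hsum ▸ .inl (.inl ⟨i, j, hij, .inr rfl⟩)) (htwice ▸ .inl (.inr ⟨j, rfl⟩)))
  rintro γ ⟨hγ, hU⟩
  have h0 : ∀ a, a ≠ i → a ≠ j → γ a = 0 := fun a hai haj =>
    apply_eq_zero_of_mem_span (by rintro v (rfl | rfl) <;> simp [hai, haj]) hU
  have h0neg : ∀ a, a ≠ i → a ≠ j → (-γ) a = 0 := fun a hai haj => by simp [h0 a hai haj]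
  simp only [typeC2Roots, hsum, htwice, Set.mem_insert_iff, Set.mem_singleton_iff]
  rcases hγ with hγ | hγ
  · rcases eq_of_mem_CnPos_of_apply_eq_zero hij hγ h0 with h | h | h | h <;> tauto
  · rcases eq_of_mem_CnPos_of_apply_eq_zero hij hγ h0neg with h | h | h | h <;>
      rw [neg_eq_iff_eq_neg] at h <;> tauto

lemma two_smul_add_mem_CnRoots_of_rootsIn_eq {α β : EuclideanSpace ℝ (Fin n)}
    (h : rootsIn n (Submodule.span ℝ {α, β}) = typeC2Roots α β) : (2 : ℝ) • α + β ∈ CnRoots n := by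
  have : (2 : ℝ) • α + β ∈ rootsIn n (Submodule.span ℝ {α, β}) := h ▸ by simp [typeC2Roots]
  exact this.1

lemma apply_eq_neg_one_of_two_smul_add_mem_CnRoots {α : EuclideanSpace ℝ (Fin n)}
    (hα : α ∈ CnPos n) (hshort : ⟪α, α⟫ = 2) {k : Fin n}
    (h : (2 : ℝ) • α + (e k + e k) ∈ CnRoots n) : α k = -1 := by
  have hnorm : ⟪(2 : ℝ) • α + (e k + e k), (2 : ℝ) • α + (e k + e k)⟫ = 12 + 8 * α k := by
    rw [real_inner_add_add_self, real_inner_smul_left, real_inner_smul_left, real_inner_smul_right,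
      hshort, inner_self_e_add_self, inner_add_right, inner_e_right]
    ring
  rcases inner_self_of_mem_CnRoots h with h | h
  · have hk : α k = -5 / 4 := by linarith
    exfalso
    rcases hα with ⟨i, j, -, rfl | rfl⟩ | ⟨i, rfl⟩
    all_goals
      simp only [PiLp.sub_apply, PiLp.add_apply, e_apply] at hk
      split_ifs at hk <;> norm_num at hk
  · linarith

lemma exists_eq_e_add_self_and_apply_eq_neg_one {α β : EuclideanSpace ℝ (Fin n)}
    (hα : α ∈ CnPos n) (hshort : ⟪α, α⟫ = 2) (hβ : β ∈ CnPos n) (hlong : ⟪β, β⟫ = 4)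
    (hC2 : rootsIn n (Submodule.span ℝ {α, β}) = typeC2Roots α β) :
    ∃ k, β = e k + e k ∧ α k = -1 := by
  obtain ⟨k, rfl⟩ := exists_eq_e_add_self_of_mem_CnPos hβ hlong
  exact ⟨k, rfl, apply_eq_neg_one_of_two_smul_add_mem_CnRoots hα hshort
    (two_smul_add_mem_CnRoots_of_rootsIn_eq hC2)⟩

/-- In `Cₙ`, a short positive root `α` lies in the subsystem
`A_{n-1} = {e_j - e_i}` iff there is a positive long root `β` such that the roots of `Cₙ`
in `span{α, β}` form a root system of type `C₂` with `α`, `β` its short and long simple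
roots, i.e. the roots in the span are exactly `±α, ±β, ±(α+β), ±(2α+β)`; moreover when
`α = e_j - e_i` with `i < j`, the root `β = 2eᵢ` is the unique such root. -/
theorem short_root_in_A_iff (n : ℕ) (α : EuclideanSpace ℝ (Fin n))
    (hα : α ∈ CnPos n) (hshort : ⟪α, α⟫ = (2 : ℝ)) :
    ((∃ i j : Fin n, i < j ∧ α = e j - e i) ↔
      ∃ β ∈ CnPos n, ⟪β, β⟫ = (4 : ℝ) ∧
        {γ | γ ∈ CnRoots n ∧ γ ∈ (Submodule.span ℝ {α, β} : Submodule ℝ _)} =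
          ({α, -α, β, -β, α + β, -(α + β), (2 : ℝ) • α + β, -((2 : ℝ) • α + β)} :
            Set (EuclideanSpace ℝ (Fin n)))) ∧
    (∀ i j : Fin n, i < j → α = e j - e i →
      ∀ β ∈ CnPos n,
        (⟪β, β⟫ = (4 : ℝ) ∧
          {γ | γ ∈ CnRoots n ∧ γ ∈ (Submodule.span ℝ {α, β} : Submodule ℝ _)} =
            ({α, -α, β, -β, α + β, -(α + β), (2 : ℝ) • α + β, -((2 : ℝ) • α + β)} :
              Set (EuclideanSpace ℝ (Fin n)))) →
        β = e i + e i) := by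
  refine ⟨⟨?_, ?_⟩, ?_⟩
  · rintro ⟨i, j, hij, rfl⟩
    exact ⟨e i + e i, .inr ⟨i, rfl⟩, inner_self_e_add_self i, rootsIn_span_e_sub_e_e_add_self hij⟩
  · rintro ⟨β, hβ, hlong, hC2⟩
    obtain ⟨k, -, hk⟩ := exists_eq_e_add_self_and_apply_eq_neg_one hα hshort hβ hlong hC2
    obtain ⟨j, hkj, rfl⟩ := eq_e_sub_e_of_mem_CnPos_of_apply_eq_neg_one hα hk
    exact ⟨k, j, hkj, rfl⟩
  · rintro i j hij rfl β hβ ⟨hlong, hC2⟩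
    obtain ⟨k, rfl, hk⟩ := exists_eq_e_add_self_and_apply_eq_neg_one hα hshort hβ hlong hC2
    rw [(e_sub_e_apply_eq_neg_one_iff hij.ne k).mp hk]

end StmtCn
end

section
/- Duality of biconvexity: a subset S of R⁺ is biconvex in R if and only if the set of coroots S̆ = {2α/(α,α) : α ∈ S} is biconvex in the dual root system R̆; furthermore the hyperplane arrangements A(S) and A(S̆) coincide. -/
open scoped RealInnerProductSpace

variable {V : Type*} [NormedAddCommGroup V] [InnerProductSpace ℝ V]

/-- The coroot `ᾰ = 2α/(α, α)` of a root `α`. -/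
noncomputable def coroot (α : V) : V := (2 / ⟪α, α⟫) • α

/-!
Biconvex sets of positive roots are exactly the sets `{γ ∈ R⁺ | ⟪u, γ⟫ < 0}` cut out by a
vector `u` orthogonal to no root. By induction on `|S|`: an element `α ∈ S` of minimal height is
indecomposable, so the reflection `s_α` permutes the positive roots outside `ℝα`, and
`s_α (S \ ℝα)` is a smaller biconvex set; if it is cut out by `u`, then `S` is cut out by
`s_α u`. The argument only uses a vector that is positive on `R⁺`, which also serves for the
coroots, so it applies to `R̆` as well. Since `γ̆` is a positive multiple of `γ`, the sign of
`⟪u, γ̆⟫` is that of `⟪u, γ⟫` and the hyperplane `γ̆⊥` is `γ⊥`.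
-/

theorem reflection_orthogonal_singleton_apply (α x : V) :
    (ℝ ∙ α)ᗮ.reflection x = x - (2 * ⟪α, x⟫ / ⟪α, α⟫) • α := by
  rw [Submodule.reflection_orthogonal_apply, Submodule.reflection_singleton_apply,
    real_inner_self_eq_norm_sq]
  simp only [RCLike.ofReal_real_eq_id, id]
  module

theorem Submodule.inner_reflection_left (K : Submodule ℝ V) [K.HasOrthogonalProjection]
    (x y : V) : ⟪K.reflection x, y⟫ = ⟪x, K.reflection y⟫ := by
  conv_lhs => rw [← K.reflection_reflection y]
  exact K.reflection.inner_map_map x (K.reflection y)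

theorem reflection_mem_span_singleton_iff {α x : V} :
    (ℝ ∙ α)ᗮ.reflection x ∈ ℝ ∙ α ↔ x ∈ ℝ ∙ α := by
  refine ⟨fun h => ?_, fun h => ?_⟩
  · have hx := Submodule.reflection_mem_subspace_orthogonal_precomplement_eq_neg h
    rw [Submodule.reflection_reflection] at hx
    rw [hx]
    exact neg_mem h
  · rw [Submodule.reflection_mem_subspace_orthogonal_precomplement_eq_neg h]
    exact neg_mem h

def negSet (P : Set V) (u : V) : Set V := {γ ∈ P | ⟪u, γ⟫ < 0}

theorem isBiconvex_negSet (P : Set V) (u : V) : IsBiconvex P (negSet P u) := by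
  refine ⟨fun γ hγ => hγ.1, fun a b ha hb hab => ⟨hab, ?_⟩, fun a b ha hb hab => ⟨hab, ?_⟩⟩
  · rw [inner_add_right]
    linarith [ha.2, hb.2]
  · rintro ⟨-, hlt⟩
    have ha' : 0 ≤ ⟪u, a⟫ := not_lt.1 fun h => ha.2 ⟨ha.1, h⟩
    have hb' : 0 ≤ ⟪u, b⟫ := not_lt.1 fun h => hb.2 ⟨hb.1, h⟩
    rw [inner_add_right] at hlt
    linarith

theorem inner_coroot_right (u α : V) : ⟪u, coroot α⟫ = 2 / ⟪α, α⟫ * ⟪u, α⟫ :=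
  real_inner_smul_right _ _ _

theorem inner_coroot_left (α v : V) : ⟪coroot α, v⟫ = 2 / ⟪α, α⟫ * ⟪α, v⟫ :=
  real_inner_smul_left _ _ _

theorem inner_coroot_self (α : V) : ⟪coroot α, coroot α⟫ = 4 / ⟪α, α⟫ := by
  rw [inner_coroot_left, inner_coroot_right]
  rcases eq_or_ne ⟪α, α⟫ 0 with h | h
  · rw [h]
    simp
  · field_simp
    ring

/-- `coroot 0 = 0` because `2 / 0 = 0`, so `coroot` is an involution of the whole space. -/
theorem coroot_involutive : Function.Involutive (coroot : V → V) := fun α => by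
  rcases eq_or_ne α 0 with rfl | h
  · simp [coroot]
  have := real_inner_self_pos.2 h
  have hc : 2 / (4 / ⟪α, α⟫) * (2 / ⟪α, α⟫) = 1 := by
    field_simp
    norm_num
  rw [coroot, inner_coroot_self, coroot, smul_smul, hc, one_smul]

theorem coroot_neg (α : V) : coroot (-α) = -coroot α := by
  simp [coroot]

theorem inner_coroot_right_neg_iff (u α : V) : ⟪u, coroot α⟫ < 0 ↔ ⟪u, α⟫ < 0 := by
  rcases eq_or_ne α 0 with rfl | h
  · simp [coroot]
  rw [inner_coroot_right, ← smul_eq_mul,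
    smul_neg_iff_of_pos_left (div_pos two_pos (real_inner_self_pos.2 h))]

theorem inner_coroot_left_eq_zero_iff (α v : V) : ⟪coroot α, v⟫ = 0 ↔ ⟪α, v⟫ = 0 := by
  rcases eq_or_ne α 0 with rfl | h
  · simp [coroot]
  rw [inner_coroot_left, mul_eq_zero, or_iff_right (div_pos two_pos (real_inner_self_pos.2 h)).ne']

theorem span_coroot {α : V} (h : α ≠ 0) : ℝ ∙ coroot α = ℝ ∙ α :=
  Submodule.span_singleton_smul_eq (div_pos two_pos (real_inner_self_pos.2 h)).ne'.isUnit α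

theorem coroot_reflection (K : Submodule ℝ V) [K.HasOrthogonalProjection] (x : V) :
    coroot (K.reflection x) = K.reflection (coroot x) := by
  rw [coroot, coroot, map_smul, LinearIsometryEquiv.inner_map_map]

theorem image_coroot_negSet (P : Set V) (u : V) :
    coroot '' negSet P u = negSet (coroot '' P) u := by
  ext x
  constructor
  · rintro ⟨γ, ⟨hγ, hu⟩, rfl⟩
    exact ⟨Set.mem_image_of_mem _ hγ, (inner_coroot_right_neg_iff u γ).2 hu⟩
  · rintro ⟨⟨γ, hγ, rfl⟩, hu⟩
    exact ⟨γ, ⟨hγ, (inner_coroot_right_neg_iff u γ).1 hu⟩, rfl⟩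

def IsIndecomposable (P : Set V) (α : V) : Prop :=
  α ∈ P ∧ ∀ β ∈ P, ∀ γ ∈ P, β + γ ≠ α

/-- The set `s_α (S \ ℝα)`, written as a preimage since `s_α` is an involution. -/
noncomputable def reflectedSet (α : V) (S : Set V) : Set V :=
  (ℝ ∙ α)ᗮ.reflection ⁻¹' (S \ (ℝ ∙ α))

theorem mem_reflectedSet {α x : V} {S : Set V} :
    x ∈ reflectedSet α S ↔ (ℝ ∙ α)ᗮ.reflection x ∈ S ∧ x ∉ ℝ ∙ α := by
  simp only [reflectedSet, Set.mem_preimage, Set.mem_sdiff, SetLike.mem_coe,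
    reflection_mem_span_singleton_iff]

theorem ncard_reflectedSet_lt {α : V} {S : Set V} (hS : S.Finite) (hαS : α ∈ S) :
    (reflectedSet α S).ncard < S.ncard := by
  rw [reflectedSet, Set.ncard_preimage_of_injective_subset_range
    (LinearIsometryEquiv.injective _) (by simp)]
  exact Set.ncard_lt_ncard
    ⟨Set.sdiff_subset, fun h => (h hαS).2 (Submodule.mem_span_singleton_self α)⟩ hS

/-- Positivity is given by a vector `functional` rather than by simple roots, so that the
coroots form a system of the same kind (`PositiveSystem.dual`). -/
structure PositiveSystem (V : Type*) [NormedAddCommGroup V] [InnerProductSpace ℝ V] where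
  roots : Set V
  pos : Set V
  functional : V
  finite : roots.Finite
  crystallographic : ∀ α ∈ roots, ∀ β ∈ roots, ∃ n : ℤ, 2 * ⟪α, β⟫ = (n : ℝ) * ⟪α, α⟫
  reflection_mem : ∀ α ∈ roots, ∀ β ∈ roots, (ℝ ∙ α)ᗮ.reflection β ∈ roots
  pos_subset : pos ⊆ roots
  pos_total : ∀ α ∈ roots, α ∈ pos ∨ -α ∈ pos
  functional_pos : ∀ α ∈ pos, 0 < ⟪functional, α⟫

namespace PositiveSystem

variable (K : PositiveSystem V)

theorem zero_not_mem : (0 : V) ∉ K.roots := fun h => by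
  rcases K.pos_total 0 h with h0 | h0
  · simpa using K.functional_pos 0 h0
  · simpa using K.functional_pos _ h0

variable {K}

theorem ne_zero_of_mem {α : V} (hα : α ∈ K.roots) : α ≠ 0 :=
  fun h => K.zero_not_mem (h ▸ hα)

theorem inner_self_pos {α : V} (hα : α ∈ K.roots) : 0 < ⟪α, α⟫ :=
  real_inner_self_pos.2 (ne_zero_of_mem hα)

theorem neg_mem {α : V} (hα : α ∈ K.roots) : -α ∈ K.roots := by
  simpa [Submodule.reflection_orthogonalComplement_singleton_eq_neg] using
    K.reflection_mem α hα α hα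

theorem mem_pos_iff {α : V} (hα : α ∈ K.roots) : α ∈ K.pos ↔ 0 < ⟪K.functional, α⟫ := by
  refine ⟨K.functional_pos α, fun h => (K.pos_total α hα).resolve_right fun hneg => ?_⟩
  have := K.functional_pos _ hneg
  rw [inner_neg_right] at this
  linarith

theorem exists_reflection_eq {α β : V} (hα : α ∈ K.roots) (hβ : β ∈ K.roots) :
    ∃ n : ℤ, 2 * ⟪α, β⟫ = n * ⟪α, α⟫ ∧ (ℝ ∙ α)ᗮ.reflection β = β - (n : ℝ) • α := by
  obtain ⟨n, hn⟩ := K.crystallographic α hα β hβ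
  refine ⟨n, hn, ?_⟩
  rw [reflection_orthogonal_singleton_apply, hn, mul_div_cancel_right₀ _ (inner_self_pos hα).ne']

/-- If neither Cartan integer is `1`, both are at least `2`, which forces `‖α - β‖ = 0`. -/
theorem sub_mem_of_inner_pos {α β : V} (hα : α ∈ K.roots) (hβ : β ∈ K.roots)
    (h : 0 < ⟪α, β⟫) (hne : α ≠ β) : α - β ∈ K.roots := by
  have ha := inner_self_pos hα
  have hb := inner_self_pos hβ
  obtain ⟨m, hm, hsm⟩ := exists_reflection_eq hα hβ
  obtain ⟨n, hn, hsn⟩ := exists_reflection_eq hβ hα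
  rw [real_inner_comm] at hn
  by_cases hm1 : m = 1
  · simpa [hsm, hm1] using neg_mem (K.reflection_mem α hα β hβ)
  by_cases hn1 : n = 1
  · simpa [hsn, hn1] using K.reflection_mem β hβ α hα
  have hm0 : (0 : ℝ) < m := by nlinarith
  have hn0 : (0 : ℝ) < n := by nlinarith
  have hm2 : (2 : ℝ) ≤ m := by
    have : (0 : ℤ) < m := by exact_mod_cast hm0
    exact_mod_cast (by omega : (2 : ℤ) ≤ m)
  have hn2 : (2 : ℝ) ≤ n := by
    have : (0 : ℤ) < n := by exact_mod_cast hn0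
    exact_mod_cast (by omega : (2 : ℤ) ≤ n)
  refine absurd (sub_eq_zero.1 (real_inner_self_nonpos.1 ?_)) hne
  rw [inner_sub_left, inner_sub_right, inner_sub_right, real_inner_comm α β]
  nlinarith

theorem eq_half_or_one_or_two_of_smul_mem {α : V} {t : ℝ} (hα : α ∈ K.roots) (htα : t • α ∈ K.roots)
    (ht : 0 < t) : t = 1 / 2 ∨ t = 1 ∨ t = 2 := by
  have ha := inner_self_pos hα
  obtain ⟨n, hn⟩ := K.crystallographic α hα _ htα
  obtain ⟨m, hm⟩ := K.crystallographic _ htα α hα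
  simp only [real_inner_smul_left, real_inner_smul_right] at hn hm
  have hnt : 2 * t = n := mul_right_cancel₀ ha.ne' (by linarith)
  have hmt : 2 = m * t := mul_right_cancel₀ (mul_pos ht ha).ne' (by linarith)
  have hmn : m * n = 4 := by
    have : (m : ℝ) * n = 4 := by rw [← hnt]; linear_combination (-2) * hmt
    exact_mod_cast this
  have hn0 : 0 < n := by
    have : (0 : ℝ) < n := by linarith
    exact_mod_cast this
  have hn4 : n ≤ 4 := Int.le_of_dvd (by norm_num) ⟨m, by linarith⟩
  interval_cases n
  · left; push_cast at hnt; linarith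
  · right; left; push_cast at hnt; linarith
  · omega
  · right; right; push_cast at hnt; linarith

theorem sub_mem_pos {α δ : V} (hα : IsIndecomposable K.pos α) (hδ : δ ∈ K.pos)
    (hδα : δ - α ∈ K.roots) : δ - α ∈ K.pos :=
  (K.pos_total _ hδα).resolve_right fun hneg => hα.2 δ hδ _ hneg (by abel)

/-- Walk down the `α`-string from `β` one step at a time: the intermediate vectors are roots, and
a step from a positive to a negative root would decompose `α`. -/
theorem sub_nsmul_mem_pos {α : V} (hα : IsIndecomposable K.pos α) :
    ∀ (n : ℕ) {β : V}, β ∈ K.pos → β ∉ ℝ ∙ α → β - (n : ℝ) • α ∈ K.roots →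
      β - (n : ℝ) • α ∈ K.pos := by
  have hαR := K.pos_subset hα.1
  intro n
  induction n with
  | zero => intro β hβ _ _; simpa using hβ
  | succ m ih =>
    intro β hβ hβα hR
    have hsucc : β - ((m + 1 : ℕ) : ℝ) • α = (β - α) - (m : ℝ) • α := by push_cast; module
    by_cases hpos : 0 < ⟪β, α⟫
    · have hne : β ≠ α := fun h => hβα (by rw [h]; exact Submodule.mem_span_singleton_self α)
      have h1 : β - α ∈ K.pos :=
        sub_mem_pos hα hβ (sub_mem_of_inner_pos (K.pos_subset hβ) hαR hpos hne)
      have h2 : β - α ∉ ℝ ∙ α := fun h =>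
        hβα (by simpa using add_mem h (Submodule.mem_span_singleton_self α))
      rw [hsucc] at hR ⊢
      exact ih h1 h2 hR
    · have hinner : 0 < ⟪β - ((m + 1 : ℕ) : ℝ) • α, -α⟫ := by
        rw [inner_neg_right, inner_sub_left, real_inner_smul_left]
        have := inner_self_pos hαR
        push_cast
        nlinarith
      have hne : β - ((m + 1 : ℕ) : ℝ) • α ≠ -α := fun h =>
        hβα (Submodule.mem_span_singleton.2 ⟨m, by linear_combination (norm := module) -h⟩)
      have hm : β - (m : ℝ) • α ∈ K.roots := by
        have := sub_mem_of_inner_pos hR (neg_mem hαR) hinner hne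
        convert this using 1
        push_cast
        module
      have := sub_mem_pos hα (ih hβ hβα hm) (by convert hR using 1; push_cast; module)
      convert this using 1
      push_cast
      module

theorem reflection_mem_pos {α β : V} (hα : IsIndecomposable K.pos α) (hβ : β ∈ K.pos)
    (hβα : β ∉ ℝ ∙ α) : (ℝ ∙ α)ᗮ.reflection β ∈ K.pos := by
  have hαR := K.pos_subset hα.1
  have hR := K.reflection_mem α hαR β (K.pos_subset hβ)
  obtain ⟨n, -, hs⟩ := exists_reflection_eq hαR (K.pos_subset hβ)
  rw [hs] at hR ⊢
  rcases le_or_gt n 0 with hn | hn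
  · rw [mem_pos_iff hR, inner_sub_right, real_inner_smul_right]
    have := K.functional_pos α hα.1
    have := K.functional_pos β hβ
    have : (n : ℝ) ≤ 0 := by exact_mod_cast hn
    nlinarith
  · lift n to ℕ using hn.le
    exact sub_nsmul_mem_pos hα n hβ hβα (by exact_mod_cast hR)

theorem isIndecomposable_of_forall_le {S : Set V} {α : V} (hS : IsCoconvex K.pos S)
    (hαS : α ∈ S) (hmin : ∀ β ∈ S, ⟪K.functional, α⟫ ≤ ⟪K.functional, β⟫) :
    IsIndecomposable K.pos α := by
  refine ⟨hS.1 hαS, fun β hβ γ hγ hsum => ?_⟩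
  have hα : ⟪K.functional, α⟫ = ⟪K.functional, β⟫ + ⟪K.functional, γ⟫ := by
    rw [← hsum, inner_add_right]
  by_cases hβS : β ∈ S
  · linarith [hmin β hβS, K.functional_pos γ hγ]
  by_cases hγS : γ ∈ S
  · linarith [hmin γ hγS, K.functional_pos β hβ]
  exact (hS.2 ⟨hβ, hβS⟩ ⟨hγ, hγS⟩ (hsum ▸ hS.1 hαS)).2 (hsum ▸ hαS)

/-- The positive roots in `ℝα` are among `α / 2`, `α`, `2α`, and `α / 2` would decompose `α`. -/
theorem mem_of_mem_span_singleton {S : Set V} {α x : V} (hS : IsSumClosed K.pos S)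
    (hα : IsIndecomposable K.pos α) (hαS : α ∈ S) (hx : x ∈ K.pos) (hxα : x ∈ ℝ ∙ α) :
    x ∈ S := by
  obtain ⟨t, rfl⟩ := Submodule.mem_span_singleton.1 hxα
  have ht : 0 < t := by
    have h := K.functional_pos _ hx
    rw [real_inner_smul_right] at h
    exact pos_of_mul_pos_left h (K.functional_pos α hα.1).le
  rcases eq_half_or_one_or_two_of_smul_mem (K.pos_subset hα.1) (K.pos_subset hx) ht with
    rfl | rfl | rfl
  · exact absurd (by module) (hα.2 _ hx _ hx)
  · simpa using hαS
  · rw [two_smul] at hx ⊢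
    exact hS hαS hαS hx

theorem isSumClosed_reflectedSet {S : Set V} {α : V} (hα : IsIndecomposable K.pos α)
    (hSP : S ⊆ K.pos) (hS : IsSumClosed K.pos S) : IsSumClosed K.pos (reflectedSet α S) := by
  intro x y hx hy hxy
  rw [mem_reflectedSet] at hx hy ⊢
  have hxyα : x + y ∉ ℝ ∙ α := fun h => by
    have hs := Submodule.reflection_mem_subspace_orthogonal_precomplement_eq_neg h
    have h1 := K.functional_pos _ (hSP hx.1)
    have h2 := K.functional_pos _ (hSP hy.1)
    have h3 := K.functional_pos _ hxy
    rw [map_add] at hs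
    have := congrArg (⟪K.functional, ·⟫) hs
    simp only [inner_add_right, inner_neg_right] at this h3
    linarith
  have hpos := reflection_mem_pos hα hxy hxyα
  rw [map_add] at hpos ⊢
  exact ⟨hS hx.1 hy.1 hpos, hxyα⟩

/-- As `s_α x = -x`, `s_α y = s_α (x + y) + x` is a sum of two elements of `S`. -/
theorem mem_reflectedSet_of_add_mem {S : Set V} {α x y : V} (hα : IsIndecomposable K.pos α)
    (hS : IsSumClosed K.pos S) (hαS : α ∈ S) (hx : x ∈ K.pos) (hxα : x ∈ ℝ ∙ α)
    (hy : y ∈ K.pos) (hxy : x + y ∈ reflectedSet α S) : y ∈ reflectedSet α S := by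
  rw [mem_reflectedSet] at hxy ⊢
  have hyα : y ∉ ℝ ∙ α := fun h => hxy.2 (add_mem hxα h)
  have hsy : (ℝ ∙ α)ᗮ.reflection y = (ℝ ∙ α)ᗮ.reflection (x + y) + x := by
    rw [map_add, Submodule.reflection_mem_subspace_orthogonal_precomplement_eq_neg hxα]
    abel
  refine ⟨?_, hyα⟩
  have hpos := reflection_mem_pos hα hy hyα
  rw [hsy] at hpos ⊢
  exact hS hxy.1 (mem_of_mem_span_singleton hS hα hαS hx hxα) hpos

theorem isSumClosed_diff_reflectedSet {S : Set V} {α : V} (hα : IsIndecomposable K.pos α)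
    (hS : IsBiconvex K.pos S) (hαS : α ∈ S) :
    IsSumClosed K.pos (K.pos \ reflectedSet α S) := by
  rintro x y ⟨hx, hx'⟩ ⟨hy, hy'⟩ hxy
  refine ⟨hxy, fun h => ?_⟩
  by_cases hxα : x ∈ ℝ ∙ α
  · exact hy' (mem_reflectedSet_of_add_mem hα hS.2.1 hαS hx hxα hy h)
  by_cases hyα : y ∈ ℝ ∙ α
  · exact hx' (mem_reflectedSet_of_add_mem hα hS.2.1 hαS hy hyα hx (add_comm x y ▸ h))
  rw [mem_reflectedSet, map_add] at h
  have hsx : (ℝ ∙ α)ᗮ.reflection x ∉ S := fun h' => hx' (mem_reflectedSet.2 ⟨h', hxα⟩)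
  have hsy : (ℝ ∙ α)ᗮ.reflection y ∉ S := fun h' => hy' (mem_reflectedSet.2 ⟨h', hyα⟩)
  exact (hS.2.2 ⟨reflection_mem_pos hα hx hxα, hsx⟩ ⟨reflection_mem_pos hα hy hyα, hsy⟩
    (hS.1 h.1)).2 h.1

theorem isBiconvex_reflectedSet {S : Set V} {α : V} (hα : IsIndecomposable K.pos α)
    (hS : IsBiconvex K.pos S) (hαS : α ∈ S) : IsBiconvex K.pos (reflectedSet α S) := by
  refine ⟨fun x hx => ?_, isSumClosed_reflectedSet hα hS.1 hS.2.1,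
    isSumClosed_diff_reflectedSet hα hS hαS⟩
  obtain ⟨hsx, hxα⟩ := mem_reflectedSet.1 hx
  simpa using reflection_mem_pos hα (hS.1 hsx) (reflection_mem_span_singleton_iff.not.2 hxα)

theorem inner_reflection_ne_zero {α u : V} (hα : α ∈ K.roots)
    (hu : ∀ γ ∈ K.pos, ⟪u, γ⟫ ≠ 0) : ∀ γ ∈ K.pos, ⟪(ℝ ∙ α)ᗮ.reflection u, γ⟫ ≠ 0 := by
  intro γ hγ
  rw [Submodule.inner_reflection_left]
  rcases K.pos_total _ (K.reflection_mem α hα γ (K.pos_subset hγ)) with h | h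
  · exact hu _ h
  · simpa using hu _ h

theorem eq_negSet_of_reflectedSet_eq {S : Set V} {α u : V} (hα : IsIndecomposable K.pos α)
    (hSP : S ⊆ K.pos) (hS : IsSumClosed K.pos S) (hαS : α ∈ S) (hu : ∀ γ ∈ K.pos, ⟪u, γ⟫ ≠ 0)
    (hSu : reflectedSet α S = negSet K.pos u) :
    S = negSet K.pos ((ℝ ∙ α)ᗮ.reflection u) := by
  ext γ
  by_cases hγ : γ ∈ K.pos
  swap
  · exact iff_of_false (fun h => hγ (hSP h)) (fun h => hγ h.1)
  simp only [negSet, Set.mem_ofPred_eq, hγ, true_and, Submodule.inner_reflection_left]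
  by_cases hγα : γ ∈ ℝ ∙ α
  · refine iff_of_true (mem_of_mem_span_singleton hS hα hαS hγ hγα) ?_
    have hγu : γ ∉ negSet K.pos u := hSu ▸ fun h => (mem_reflectedSet.1 h).2 hγα
    rw [Submodule.reflection_mem_subspace_orthogonal_precomplement_eq_neg hγα, inner_neg_right,
      neg_lt_zero]
    exact lt_of_le_of_ne (not_lt.1 fun h => hγu ⟨hγ, h⟩) (hu γ hγ).symm
  · have hsγ : (ℝ ∙ α)ᗮ.reflection γ ∈ reflectedSet α S ↔ γ ∈ S := by
      simp [mem_reflectedSet, reflection_mem_span_singleton_iff, hγα]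
    rw [← hsγ, hSu]
    simp [negSet, reflection_mem_pos hα hγ hγα]

theorem exists_eq_negSet_of_isBiconvex {S : Set V} (hS : IsBiconvex K.pos S) :
    ∃ u : V, (∀ γ ∈ K.pos, ⟪u, γ⟫ ≠ 0) ∧ S = negSet K.pos u := by
  induction hN : S.ncard using Nat.strong_induction_on generalizing S with
  | _ N ih =>
  have hfin : S.Finite := K.finite.subset (hS.1.trans K.pos_subset)
  rcases S.eq_empty_or_nonempty with rfl | hne
  · refine ⟨K.functional, fun γ hγ => (K.functional_pos γ hγ).ne', ?_⟩
    ext γ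
    simp only [negSet, Set.mem_ofPred_eq, Set.mem_empty_iff_false, false_iff, not_and, not_lt]
    exact fun hγ => (K.functional_pos γ hγ).le
  obtain ⟨α, hαS, hmin⟩ := Set.exists_min_image S (⟪K.functional, ·⟫) hfin hne
  have hα := isIndecomposable_of_forall_le ⟨hS.1, hS.2.2⟩ hαS hmin
  obtain ⟨u, hu, hSu⟩ :=
    ih _ (hN ▸ ncard_reflectedSet_lt hfin hαS) (isBiconvex_reflectedSet hα hS hαS) rfl
  exact ⟨_, inner_reflection_ne_zero (K.pos_subset hα.1) hu,
    eq_negSet_of_reflectedSet_eq hα hS.1 hS.2.1 hαS hu hSu⟩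

noncomputable def dual (K : PositiveSystem V) : PositiveSystem V where
  roots := coroot '' K.roots
  pos := coroot '' K.pos
  functional := K.functional
  finite := K.finite.image coroot
  crystallographic := by
    rintro _ ⟨α, hα, rfl⟩ _ ⟨β, hβ, rfl⟩
    obtain ⟨n, hn⟩ := K.crystallographic β hβ α hα
    have ha := inner_self_pos hα
    have hb := inner_self_pos hβ
    rw [real_inner_comm α β] at hn
    refine ⟨n, ?_⟩
    rw [inner_coroot_left, inner_coroot_right, inner_coroot_self]
    field_simp
    linear_combination 4 * hn
  reflection_mem := by
    rintro _ ⟨α, hα, rfl⟩ _ ⟨β, hβ, rfl⟩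
    simp only [span_coroot (ne_zero_of_mem hα), ← coroot_reflection]
    exact Set.mem_image_of_mem _ (K.reflection_mem α hα β hβ)
  pos_subset := Set.image_mono K.pos_subset
  pos_total := by
    rintro _ ⟨α, hα, rfl⟩
    rw [← coroot_neg]
    exact (K.pos_total α hα).imp (Set.mem_image_of_mem _) (Set.mem_image_of_mem _)
  functional_pos := by
    rintro _ ⟨α, hα, rfl⟩
    rw [inner_coroot_right]
    exact mul_pos (div_pos two_pos (inner_self_pos (K.pos_subset hα))) (K.functional_pos α hα)

theorem dual_pos (K : PositiveSystem V) : K.dual.pos = coroot '' K.pos := rfl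

end PositiveSystem

theorem LinearIndependent.exists_inner_eq_one {ι : Type*} [Finite ι] {v : ι → V}
    (hv : LinearIndependent ℝ v) : ∃ u : V, ∀ i, ⟪u, v i⟫ = 1 := by
  let W := Submodule.span ℝ (Set.range v)
  have : FiniteDimensional ℝ W := FiniteDimensional.span_of_finite ℝ (Set.finite_range v)
  let b := Module.Basis.span hv
  let f := LinearMap.toContinuousLinearMap b.sumCoords
  refine ⟨((InnerProductSpace.toDual ℝ W).symm f : V), fun i => ?_⟩
  calc ⟪((InnerProductSpace.toDual ℝ W).symm f : V), v i⟫
      = ⟪(InnerProductSpace.toDual ℝ W).symm f, b i⟫ := by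
        rw [Submodule.coe_inner, Module.Basis.span_apply]
    _ = 1 := by rw [InnerProductSpace.toDual_symm_apply]; exact b.sumCoords_self_apply i

theorem RootSystemData.exists_functional_pos (RS : RootSystemData V) :
    ∃ u : V, ∀ α ∈ RS.pos, 0 < ⟪u, α⟫ := by
  have : Finite RS.simple :=
    (RS.finite.subset (RS.simple_subset.trans RS.pos_subset)).to_subtype
  obtain ⟨u, hu⟩ := RS.simple_indep.exists_inner_eq_one
  refine ⟨u, fun α hα => ?_⟩
  obtain ⟨c, hc, rfl⟩ := RS.pos_nat_comb α hα
  have hne : c.support.Nonempty := by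
    rw [Finset.nonempty_iff_ne_empty]
    intro h
    apply RS.zero_not_mem
    simpa [Finsupp.sum, h] using RS.pos_subset hα
  rw [Finsupp.sum, inner_sum]
  refine Finset.sum_pos (fun v hv => ?_) hne
  rw [real_inner_smul_right, hu ⟨v, hc hv⟩, mul_one]
  exact_mod_cast Nat.pos_of_ne_zero (Finsupp.mem_support_iff.1 hv)

noncomputable def RootSystemData.toPositiveSystem (RS : RootSystemData V) :
    PositiveSystem V where
  roots := RS.roots
  pos := RS.pos
  functional := RS.exists_functional_pos.choose
  finite := RS.finite
  crystallographic := RS.crystallographic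
  reflection_mem α hα β hβ := by
    rw [reflection_orthogonal_singleton_apply]
    exact RS.reflect_mem α hα β hβ
  pos_subset := RS.pos_subset
  pos_total := RS.pos_total
  functional_pos := RS.exists_functional_pos.choose_spec

theorem biconvex_duality_coroots_general
    (RS : RootSystemData V) (S : Set V) :
    (IsBiconvex RS.pos S ↔ IsBiconvex (coroot '' RS.pos) (coroot '' S)) ∧
    ((fun α : V => {v : V | ⟪α, v⟫ = 0}) '' S
      = (fun α : V => {v : V | ⟪α, v⟫ = 0}) '' (coroot '' S)) := by
  refine ⟨⟨fun hS => ?_, fun hS => ?_⟩, ?_⟩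
  · obtain ⟨u, -, rfl⟩ := RS.toPositiveSystem.exists_eq_negSet_of_isBiconvex hS
    rw [image_coroot_negSet]
    exact isBiconvex_negSet _ u
  · obtain ⟨u, -, hu⟩ := RS.toPositiveSystem.dual.exists_eq_negSet_of_isBiconvex hS
    rw [PositiveSystem.dual_pos, ← image_coroot_negSet,
      coroot_involutive.injective.image_injective.eq_iff] at hu
    exact hu ▸ isBiconvex_negSet _ u
  · rw [Set.image_image]
    exact Set.image_congr fun α _ => Set.ext fun v => (inner_coroot_left_eq_zero_iff α v).symm

/-- `S ⊆ R⁺` is biconvex in `R` iff the set of coroots `S̆` is biconvex in the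
dual root system `R̆` (with positive roots `R̆⁺ = coroot '' R⁺`); moreover the hyperplane
arrangements `A(S)` and `A(S̆)` coincide. -/
theorem biconvex_duality_coroots
    (RS : RootSystemData V) (S : Set V) (hS : S ⊆ RS.pos) :
    (IsBiconvex RS.pos S ↔ IsBiconvex (coroot '' RS.pos) (coroot '' S)) ∧
    ((fun α : V => {v : V | ⟪α, v⟫ = 0}) '' S
      = (fun α : V => {v : V | ⟪α, v⟫ = 0}) '' (coroot '' S)) :=
  biconvex_duality_coroots_general RS S
end
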